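/- arXiv:1910.02239 — 3 statements merged into one kernel-verified Lean document; each statement's English description precedes it below -/
import Mathlib

section
/- For all integers α, β with 1 ≤ α ≤ β, it holds that F_{α,β}(⌊β/2⌋) + (1/2)·(F_{α,β}(⌈β/2⌉) − F_{α,β}(⌊β/2⌋)) ≤ 1/2. (This is the arithmetic content of the paper's claim that, under a uniform prior on the network size n over {α,…,β}, a cheater duplicating into d = ⌊β/2⌋ + 1 agents in 2-Knowledge Sharing never has expected utility exceeding 1/2, for every choice of α and β.) -/
/-- Cumulative distribution function of the uniform distribution on the
integer interval `{α, …, β}`. -/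
def uniformCDF (α β t : ℤ) : ℚ :=
  if t < α then 0
  else if t ≤ β then ((t - α + 1 : ℤ) : ℚ) / ((β - α + 1 : ℤ) : ℚ)
  else 1

theorem stmt_0 (α β : ℤ) (hα : 1 ≤ α) (hαβ : α ≤ β) :
    uniformCDF α β (β / 2) +
      (1 / 2) * (uniformCDF α β ((β + 1) / 2) - uniformCDF α β (β / 2)) ≤ 1 / 2 := by
  unfold uniformCDF
  have hβ1 : (1:ℤ) ≤ β := le_trans hα hαβ
  have hm : β / 2 ≤ β := by omega
  have hc : (β + 1) / 2 ≤ β := by omega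
  have hmc : β / 2 + (β + 1) / 2 = β := by omega
  have hden : (0:ℚ) < ((β - α + 1 : ℤ) : ℚ) := by
    exact_mod_cast (by omega : (0:ℤ) < β - α + 1)
  by_cases h1 : β / 2 < α
  · by_cases h2 : (β + 1) / 2 < α
    · simp [h1, h2]
    · simp only [if_pos h1, if_neg h2, if_pos hc]
      have hnum0 : (0:ℚ) ≤ (((β + 1) / 2 - α + 1 : ℤ) : ℚ) := by
        exact_mod_cast (by omega : (0:ℤ) ≤ (β + 1) / 2 - α + 1)
      have hle : (((β + 1) / 2 - α + 1 : ℤ) : ℚ) ≤ ((β - α + 1 : ℤ) : ℚ) := by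
        exact_mod_cast (by omega : (β + 1) / 2 - α + 1 ≤ β - α + 1)
      have := (div_le_one hden).mpr hle
      nlinarith [div_nonneg hnum0 hden.le]
  · have h2 : ¬ ((β + 1) / 2 < α) := by omega
    simp only [if_neg h1, if_neg h2, if_pos hm, if_pos hc]
    set y : ℚ := ((β - α + 1 : ℤ) : ℚ) with hy
    have hy0 : y ≠ 0 := hden.ne'
    set a : ℚ := ((β / 2 - α + 1 : ℤ) : ℚ)
    set b : ℚ := (((β + 1) / 2 - α + 1 : ℤ) : ℚ)
    have key : a + b ≤ y := by
      unfold y a b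
      exact_mod_cast (by omega : (β / 2 - α + 1) + ((β + 1) / 2 - α + 1) ≤ β - α + 1)
    have heq : a / y + 1 / 2 * (b / y - a / y) = (a + b) / (2 * y) := by
      field_simp
      ring
    rw [heq, div_le_iff₀ (by linarith)]
    linarith
end

section
/- For all integers α ≥ 1, β ≥ 2α and k ≥ 2: G_{α,β}(⌊β/2⌋) + (1/k)·(G_{α,β}(⌈β/2⌉) − G_{α,β}(⌊β/2⌋)) > 1/k. (This is the arithmetic content of the paper's claim that under a geometric prior on {α,…,β} with β ≥ 2α, for every k ≥ 2 an agent duplicating into d = ⌊β/2⌋ + 1 agents has an incentive to cheat in k-Knowledge Sharing, so no equilibrium exists.) -/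
/-- Cumulative distribution function of the paper's geometric prior on `{α, …, β}`:
each `j ∈ {α,…,β}` has probability `2^(α-j-1) + c` with
`c = 2^(α-β-1)/(β-α+1)`. -/
noncomputable def geomCDF (α β t : ℤ) : ℚ :=
  if t < α then 0
  else ∑ j ∈ Finset.Icc α (min t β),
    ((2 : ℚ) ^ (α - j - 1) + (2 : ℚ) ^ (α - β - 1) / ((β - α + 1 : ℤ) : ℚ))

/-!
The mass `f α = 1/2 + c` of the smallest point already exceeds `1/2 ≥ 1/k`, so the CDF at
`⌊β/2⌋ ≥ α` exceeds `1/k`; the second summand is non-negative because the CDF is monotone.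
-/

namespace GeomPrior

noncomputable def weight (α β j : ℤ) : ℚ :=
  (2 : ℚ) ^ (α - j - 1) + (2 : ℚ) ^ (α - β - 1) / ((β - α + 1 : ℤ) : ℚ)

variable {α β : ℤ}

lemma weight_pos {j : ℤ} (h : α ≤ β) : 0 < weight α β j := by
  have hden : (0 : ℚ) < ((β - α + 1 : ℤ) : ℚ) := by exact_mod_cast (by omega : (0 : ℤ) < β - α + 1)
  unfold weight
  positivity

lemma weight_self (α β : ℤ) :
    weight α β α = 1 / 2 + (2 : ℚ) ^ (α - β - 1) / ((β - α + 1 : ℤ) : ℚ) := by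
  norm_num [weight]

lemma geomCDF_of_le {t : ℤ} (h : α ≤ t) :
    geomCDF α β t = ∑ j ∈ Finset.Icc α (min t β), weight α β j := by
  rw [geomCDF, if_neg (not_lt.mpr h)]
  rfl

lemma geomCDF_nonneg (t : ℤ) : 0 ≤ geomCDF α β t := by
  by_cases h : α ≤ t
  · rw [geomCDF_of_le h]
    refine Finset.sum_nonneg fun j hj => (weight_pos ?_).le
    simp only [Finset.mem_Icc, le_min_iff] at hj
    omega
  · simp [geomCDF, not_le.mp h]

lemma geomCDF_mono (α β : ℤ) : Monotone (geomCDF α β) := by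
  intro s t hst
  by_cases hs : α ≤ s
  · rw [geomCDF_of_le hs, geomCDF_of_le (hs.trans hst)]
    refine Finset.sum_le_sum_of_subset_of_nonneg
      (Finset.Icc_subset_Icc_right (min_le_min_right β hst)) fun j hj _ => (weight_pos ?_).le
    simp only [Finset.mem_Icc, le_min_iff] at hj
    omega
  · simpa [geomCDF, not_le.mp hs] using geomCDF_nonneg t

lemma half_lt_geomCDF {t : ℤ} (ht : α ≤ t) (hβ : α ≤ β) : 1 / 2 < geomCDF α β t := by
  have hc : (0 : ℚ) < (2 : ℚ) ^ (α - β - 1) / ((β - α + 1 : ℤ) : ℚ) := by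
    have : (0 : ℚ) < ((β - α + 1 : ℤ) : ℚ) := by exact_mod_cast (by omega : (0 : ℤ) < β - α + 1)
    positivity
  have hα_mem : α ∈ Finset.Icc α (min t β) := by simp [ht, hβ]
  calc (1 : ℚ) / 2 < weight α β α := by rw [weight_self]; linarith
    _ ≤ ∑ j ∈ Finset.Icc α (min t β), weight α β j :=
      Finset.single_le_sum (fun _ _ => (weight_pos hβ).le) hα_mem
    _ = geomCDF α β t := (geomCDF_of_le ht).symm

end GeomPrior

theorem stmt_9 (α β k : ℤ) (hα : 1 ≤ α) (hβ : 2 * α ≤ β) (hk : 2 ≤ k) :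
    geomCDF α β (β / 2) +
        (1 / (k : ℚ)) * (geomCDF α β ((β + 1) / 2) - geomCDF α β (β / 2)) >
      1 / (k : ℚ) := by
  have hk' : (2 : ℚ) ≤ k := by exact_mod_cast hk
  have hinv : 1 / (k : ℚ) ≤ 1 / 2 := one_div_le_one_div_of_le two_pos hk'
  have hhalf : 1 / 2 < geomCDF α β (β / 2) := GeomPrior.half_lt_geomCDF (by omega) (by omega)
  have hgap : 0 ≤ geomCDF α β ((β + 1) / 2) - geomCDF α β (β / 2) :=
    sub_nonneg.mpr (GeomPrior.geomCDF_mono α β (by omega))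
  have hmix : 0 ≤ (1 / (k : ℚ)) * (geomCDF α β ((β + 1) / 2) - geomCDF α β (β / 2)) :=
    mul_nonneg (by positivity) hgap
  linarith
end

section
/- For all integers α ≥ 2 and β ≥ α: Σ_{n=α}^{β−1} 2/(n+1) ≤ Σ_{n=α}^{β} 1/n if and only if β ≤ α + 1 (sums over integers, taken in ℚ; the left sum is empty when β = α). This is the arithmetic core of the paper's Theorem 5.1: under a uniform prior on the network size n over {α,…,β}, a cheater in fair Leader Election who duplicates into 2 agents (winning with probability 2/(n+1) when undetected, i.e., when n + 1 ≤ β) has expected utility at most that of honestly participating (winning with probability 1/n) exactly when β ≤ α + 1. -/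
/-!
Shifting the index turns the left sum into `2 S` and the right sum into `1/α + S`, where
`S = ∑_{n=α+1}^{β} 1/n`, so the inequality says `S ≤ 1/α`. For `β ≤ α + 1` the sum `S` has at most
the term `1/(α+1)`; for `β ≥ α + 2` it contains `1/(α+1) + 1/(α+2)`, which exceeds `1/α` as soon as
`α² > 2`.
-/

open Finset

theorem Finset.sum_Icc_sub_one_comp_add_one {M : Type*} [AddCommMonoid M] (f : ℤ → M) (a b : ℤ) :
    ∑ n ∈ Icc a (b - 1), f (n + 1) = ∑ n ∈ Icc (a + 1) b, f n := by
  rw [← sub_add_cancel b 1, ← map_add_right_Icc, sum_map, add_sub_cancel_right]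
  rfl

section HarmonicTail

variable {K : Type*} [Field K] [LinearOrder K] [IsStrictOrderedRing K]

theorem one_div_lt_one_div_add_one_add_one_div_add_two {a : K} (ha : 2 ≤ a) :
    1 / a < 1 / (a + 1) + 1 / (a + 2) := by
  rw [div_add_div _ _ (by linarith) (by linarith), div_lt_div_iff₀ (by linarith) (by positivity)]
  nlinarith

theorem sum_Icc_add_one_one_div_le_one_div_iff {a : ℤ} (ha : 2 ≤ a) (b : ℤ) :
    ∑ n ∈ Icc (a + 1) b, (1 : K) / n ≤ 1 / a ↔ b ≤ a + 1 := by
  have haK : (2 : K) ≤ a := by exact_mod_cast ha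
  have hterm : ∀ n : ℤ, a + 1 ≤ n → (0 : K) ≤ 1 / n := fun n hn =>
    one_div_nonneg.mpr (by exact_mod_cast (show (0 : ℤ) ≤ n by omega))
  constructor
  · intro hle
    by_contra! hb
    have hpair : Icc (a + 1) (a + 2) ⊆ Icc (a + 1) b := Icc_subset_Icc_right (by omega)
    have hpair_sum : ∑ n ∈ Icc (a + 1) (a + 2), (1 : K) / n = 1 / (a + 1) + 1 / (a + 2) := by
      rw [← insert_Icc_add_one_left_eq_Icc (by omega), sum_insert (by simp),
        show a + 1 + 1 = a + 2 by ring, Icc_self, sum_singleton]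
      push_cast
      ring
    have := sum_le_sum_of_subset_of_nonneg hpair fun n hn _ => hterm n (mem_Icc.mp hn).1
    linarith [one_div_lt_one_div_add_one_add_one_div_add_two haK]
  · intro hb
    have hsub : Icc (a + 1) b ⊆ {a + 1} := fun n hn => by
      rw [mem_singleton]
      have := mem_Icc.mp hn
      omega
    calc ∑ n ∈ Icc (a + 1) b, (1 : K) / n
        ≤ ∑ n ∈ ({a + 1} : Finset ℤ), (1 : K) / n :=
          sum_le_sum_of_subset_of_nonneg hsub fun n hn _ => hterm n (mem_singleton.mp hn).ge
      _ = 1 / (a + 1) := by push_cast [sum_singleton]; rfl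
      _ ≤ 1 / a := one_div_le_one_div_of_le (by linarith) (by linarith)

end HarmonicTail

theorem stmt_10 (α β : ℤ) (hα : 2 ≤ α) (hαβ : α ≤ β) :
    (∑ n ∈ Finset.Icc α (β - 1), (2 : ℚ) / ((n : ℚ) + 1) ≤
        ∑ n ∈ Finset.Icc α β, (1 : ℚ) / (n : ℚ)) ↔ β ≤ α + 1 := by
  set S := ∑ n ∈ Icc (α + 1) β, (1 : ℚ) / n
  have hlhs : ∑ n ∈ Icc α (β - 1), (2 : ℚ) / ((n : ℚ) + 1) = 2 * S := by
    rw [mul_sum, ← sum_Icc_sub_one_comp_add_one]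
    push_cast
    exact sum_congr rfl fun n _ => by ring
  have hrhs : ∑ n ∈ Icc α β, (1 : ℚ) / n = 1 / α + S := by
    rw [← insert_Icc_add_one_left_eq_Icc hαβ, sum_insert (by simp)]
  rw [hlhs, hrhs, ← sum_Icc_add_one_one_div_le_one_div_iff (K := ℚ) hα β]
  constructor <;> intro h <;> linarith
end
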